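/- arXiv:math/0103105 — 2 statements merged into one kernel-verified Lean document; each statement's English description precedes it below -/
import Mathlib

section
/- With ⟨H³,H³⟩_1 = 1 given, and assuming the linear relations ⟨H⁴,H²,H,H⟩₁ + ⟨H²,H²,H²,H²⟩₁ = ⟨H³,H²,H²,H⟩₁ + ⟨H²,H²,H,H³⟩₁ and ⟨H⁵,H,H⟩₁ + ⟨H³,H²,H²⟩₁ = ⟨H⁴,H²,H⟩₁ + ⟨H³,H,H³⟩₁, together with the divisor axiom ⟨γ₁,…,γ_n,H⟩₁ = ⟨γ₁,…,γ_n⟩₁ (degree 1, so H·β = 1) and the vanishing of any bracket containing a class of cohomological degree > 3 in H^*(ℙ³) (i.e., H^k = 0 for k ≥ 4), deduce that ⟨H³,H²,H²⟩₁ = 1 and ⟨H²,H²,H²,H²⟩₁ = 2. -/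
/-- The `ℙ³` computation from WDVV: model a degree-1 Gromov–Witten bracket
`⟨H^{k₁},…,H^{kₙ}⟩₁` as a function `Inv` on multisets of exponents.  Assume:
brackets containing a class `H^k` with `k ≥ 4` vanish (`H^k = 0` in `H^*(ℙ³)`);
the divisor axiom `⟨γ₁,…,γₙ,H⟩₁ = ⟨γ₁,…,γₙ⟩₁` (degree 1, so `H·β = 1`);
`⟨H³,H³⟩₁ = 1`; and the two WDVV linear relations.  Then `⟨H³,H²,H²⟩₁ = 1` (one line
through two points) and `⟨H²,H²,H²,H²⟩₁ = 2` (two lines meeting four general lines). -/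
theorem stmt_16 (Inv : Multiset ℕ → ℚ)
    (hvanish : ∀ s : Multiset ℕ, (∃ k ∈ s, 4 ≤ k) → Inv s = 0)
    (hdiv : ∀ s : Multiset ℕ, Inv (1 ::ₘ s) = Inv s)
    (hbase : Inv {3, 3} = 1)
    (hWDVV1 : Inv {4, 2, 1, 1} + Inv {2, 2, 2, 2} = Inv {3, 2, 2, 1} + Inv {2, 2, 1, 3})
    (hWDVV2 : Inv {5, 1, 1} + Inv {3, 2, 2} = Inv {4, 2, 1} + Inv {3, 1, 3}) :
    Inv {3, 2, 2} = 1 ∧ Inv {2, 2, 2, 2} = 2 := by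
  have h1 : Inv {4, 2, 1, 1} = 0 := hvanish _ ⟨4, by decide, le_refl 4⟩
  have h2 : Inv {5, 1, 1} = 0 := hvanish _ ⟨5, by decide, by norm_num⟩
  have h3 : Inv {4, 2, 1} = 0 := hvanish _ ⟨4, by decide, le_refl 4⟩
  have e1 : Inv {3, 2, 2, 1} = Inv {3, 2, 2} := by
    have : ({3, 2, 2, 1} : Multiset ℕ) = 1 ::ₘ {3, 2, 2} := by decide
    rw [this, hdiv]
  have e2 : Inv {2, 2, 1, 3} = Inv {3, 2, 2} := by
    have h : ({2, 2, 1, 3} : Multiset ℕ) = 1 ::ₘ {3, 2, 2} := by decide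
    rw [h, hdiv]
  have e3 : Inv {3, 1, 3} = Inv {3, 3} := by
    have h : ({3, 1, 3} : Multiset ℕ) = 1 ::ₘ {3, 3} := by decide
    rw [h, hdiv]
  constructor <;> linarith
end

section
/- For any n ≥ 1 and d ≥ 1, in the field ℚ(t) with H treated as nilpotent of order n+1 (i.e., working in ℚ(t)[H]/(H^{n+1})), the J-function J_d = ∏_{k=1}^d (H + kt)^{-(n+1)} has H^0-coefficient equal to 1/((d!)^{n+1} t^{d(n+1)}), and its H^1-coefficient equals −(n+1)/((d!)^{n+1} t^{d(n+1)+1}) · ∑_{k=1}^d 1/k. -/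
/-! Modulo `H²`, `J` is the inverse of `Q = P^(n+1)` with `P = ∏ (H + kt)`, so `J₀ = 1/Q₀` and
`J₁ = -Q₁/Q₀²`. The ratio `Q₁/Q₀`, the logarithmic derivative at `H = 0`, turns products into
sums: `Q₁/Q₀ = (n+1) P₁/P₀ = (n+1) ∑ 1/(kt)`. -/

open Polynomial

namespace Polynomial

section CommRing

variable {R : Type*} [CommRing R]

theorem coeff_zero_pow (p : R[X]) (m : ℕ) : (p ^ m).coeff 0 = p.coeff 0 ^ m := by
  simp [coeff_zero_eq_eval_zero]

theorem coeff_one_mul (p q : R[X]) :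
    (p * q).coeff 1 = p.coeff 0 * q.coeff 1 + p.coeff 1 * q.coeff 0 := by
  simp [coeff_mul, Finset.Nat.antidiagonal_succ]

theorem coeff_one_pow_succ (p : R[X]) (m : ℕ) :
    (p ^ (m + 1)).coeff 1 = (m + 1) * p.coeff 0 ^ m * p.coeff 1 := by
  induction m with
  | zero => simp
  | succ m ih =>
    rw [pow_succ, coeff_one_mul, ih, coeff_zero_pow]
    push_cast
    ring

theorem coeff_zero_prod_X_add_C {ι : Type*} (s : Finset ι) (a : ι → R) :
    (∏ i ∈ s, (X + C (a i))).coeff 0 = ∏ i ∈ s, a i := by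
  simp [coeff_zero_prod]

theorem X_sq_dvd_mul_sub_one_iff (q j : R[X]) :
    X ^ 2 ∣ q * j - 1 ↔
      q.coeff 0 * j.coeff 0 = 1 ∧ q.coeff 0 * j.coeff 1 + q.coeff 1 * j.coeff 0 = 0 := by
  simp [X_pow_dvd_iff, Nat.le_one_iff_eq_zero_or_eq_one, or_imp, forall_and, sub_eq_zero,
    coeff_one, coeff_one_mul]

end CommRing

section Field

variable {K : Type*} [Field K]

theorem coeff_one_prod_X_add_C {ι : Type*} (s : Finset ι) (a : ι → K)
    (ha : ∀ i ∈ s, a i ≠ 0) :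
    (∏ i ∈ s, (X + C (a i))).coeff 1 = (∏ i ∈ s, a i) * ∑ i ∈ s, (a i)⁻¹ := by
  classical
  induction s using Finset.induction_on with
  | empty => simp [coeff_one]
  | insert i s hi ih =>
    have hai : a i ≠ 0 := ha i (Finset.mem_insert_self i s)
    rw [Finset.prod_insert hi, coeff_one_mul, ih fun j hj ↦ ha j (Finset.mem_insert_of_mem hj),
      coeff_zero_prod_X_add_C, Finset.prod_insert hi, Finset.sum_insert hi]
    simp only [coeff_add, coeff_X_zero, coeff_X_one, coeff_C_zero, coeff_C_succ, zero_add,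
      add_zero]
    field_simp
    ring

theorem coeffs_of_X_sq_dvd_mul_sub_one {q j : K[X]} (h : X ^ 2 ∣ q * j - 1) :
    j.coeff 0 = (q.coeff 0)⁻¹ ∧ j.coeff 1 = -q.coeff 1 / q.coeff 0 ^ 2 := by
  obtain ⟨h0, h1⟩ := (X_sq_dvd_mul_sub_one_iff q j).mp h
  have hq0 : q.coeff 0 ≠ 0 := left_ne_zero_of_mul_eq_one h0
  refine ⟨eq_inv_of_mul_eq_one_right h0, ?_⟩
  rw [eq_div_iff (pow_ne_zero 2 hq0)]
  linear_combination q.coeff 0 * h1 - q.coeff 1 * h0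

end Field

end Polynomial

theorem stmt_17_general (n d : ℕ) (hn : 1 ≤ n) :
    ∀ J : Polynomial (RatFunc ℚ),
      (X : Polynomial (RatFunc ℚ)) ^ (n + 1) ∣
          (∏ k ∈ Finset.Icc 1 d, (X + C ((k : RatFunc ℚ) * RatFunc.X))) ^ (n + 1) * J - 1 →
        J.coeff 0 = 1 / ((d.factorial : RatFunc ℚ) ^ (n + 1) * RatFunc.X ^ (d * (n + 1))) ∧
        J.coeff 1 = -((n : RatFunc ℚ) + 1) /
              ((d.factorial : RatFunc ℚ) ^ (n + 1) * RatFunc.X ^ (d * (n + 1) + 1)) *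
            ∑ k ∈ Finset.Icc 1 d, 1 / (k : RatFunc ℚ) := by
  intro J hJ
  set t : RatFunc ℚ := RatFunc.X
  set P := ∏ k ∈ Finset.Icc 1 d, (X + C ((k : RatFunc ℚ) * t))
  have ht : t ≠ 0 := RatFunc.X_ne_zero
  have hfac : (d.factorial : RatFunc ℚ) ≠ 0 := Nat.cast_ne_zero.mpr d.factorial_ne_zero
  have hroots : ∀ k ∈ Finset.Icc 1 d, (k : RatFunc ℚ) * t ≠ 0 := fun k hk ↦
    mul_ne_zero (Nat.cast_ne_zero.mpr (by grind)) ht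
  have hP0 : P.coeff 0 = d.factorial * t ^ d := by
    rw [coeff_zero_prod_X_add_C, Finset.prod_mul_distrib, Finset.prod_const, Nat.card_Icc,
      add_tsub_cancel_right, ← Nat.cast_prod, ← Finset.Ico_add_one_right_eq_Icc,
      Finset.prod_Ico_id_eq_factorial]
  have hP1 : P.coeff 1 = P.coeff 0 * (t⁻¹ * ∑ k ∈ Finset.Icc 1 d, 1 / (k : RatFunc ℚ)) := by
    rw [coeff_one_prod_X_add_C _ _ hroots, coeff_zero_prod_X_add_C]
    simp only [mul_inv, one_div, Finset.mul_sum, mul_comm]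
  obtain ⟨hJ0, hJ1⟩ := coeffs_of_X_sq_dvd_mul_sub_one
    ((pow_dvd_pow X (Nat.succ_le_succ hn)).trans hJ)
  rw [coeff_zero_pow, hP0] at hJ0
  rw [coeff_one_pow_succ, coeff_zero_pow, hP1, hP0] at hJ1
  constructor
  · rw [hJ0]; field_simp; ring
  · rw [hJ1]; field_simp; ring

open Polynomial in
/-- The first two coefficients of Givental's `J`-function
`J_d = 1/∏_{k=1}^d (H + kt)^{n+1}` of `ℙⁿ` in `ℚ(t)[H]/(H^{n+1})`: if `J` is any polynomial
inverse of `∏_{k=1}^d (H + kt)^{n+1}` modulo `H^{n+1}`, then its `H^0`-coefficient is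
`1/((d!)^{n+1} t^{d(n+1)})` and its `H^1`-coefficient is
`-(n+1)/((d!)^{n+1} t^{d(n+1)+1}) · ∑_{k=1}^d 1/k`. -/
theorem stmt_17 (n d : ℕ) (hn : 1 ≤ n) (hd : 1 ≤ d) :
    ∀ J : Polynomial (RatFunc ℚ),
      (X : Polynomial (RatFunc ℚ)) ^ (n + 1) ∣
          (∏ k ∈ Finset.Icc 1 d, (X + C ((k : RatFunc ℚ) * RatFunc.X))) ^ (n + 1) * J - 1 →
        J.coeff 0 = 1 / ((d.factorial : RatFunc ℚ) ^ (n + 1) * RatFunc.X ^ (d * (n + 1))) ∧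
        J.coeff 1 = -((n : RatFunc ℚ) + 1) /
              ((d.factorial : RatFunc ℚ) ^ (n + 1) * RatFunc.X ^ (d * (n + 1) + 1)) *
            ∑ k ∈ Finset.Icc 1 d, 1 / (k : RatFunc ℚ) :=
  stmt_17_general n d hn
end
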